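/- Let X be an Archimedean vector lattice equipped with a convergence θ (satisfying axioms (1)–(4)) and let Y be a vector sublattice of X. Then Y is sequentially θ-closed in X if and only if Y is sequentially uθ-closed in X. -/

import Mathlib

open Filter

/-- A convergence structure `θ` on a vector lattice `X`, assigning to nets (maps from
nonempty directed preordered index types) limit points, and satisfying axioms (1)–(4):
(1) constant nets converge; (2) linearity, and `t • x →θ 0` as the scalar net `t → 0`;
(3) domination: if `x_α →θ 0` and `|y_α| ≤ |x_α|` then `y_α →θ 0`;
(4) every subnet of a `θ`-convergent net `θ`-converges to the same limit. -/
structure VLConvergence (X : Type*) [Lattice X] [AddCommGroup X] [Module ℝ X] where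
  conv : ∀ {ι : Type} [Preorder ι] [IsDirected ι (· ≤ ·)] [Nonempty ι], (ι → X) → X → Prop
  conv_const : ∀ {ι : Type} [Preorder ι] [IsDirected ι (· ≤ ·)] [Nonempty ι] (x : X),
    conv (fun _ : ι => x) x
  conv_add_smul : ∀ {ι : Type} [Preorder ι] [IsDirected ι (· ≤ ·)] [Nonempty ι]
    (f g : ι → X) (x y : X) (l : ℝ),
    conv f x → conv g y → conv (fun α => f α + l • g α) (x + l • y)
  conv_smul_zero : ∀ {ι : Type} [Preorder ι] [IsDirected ι (· ≤ ·)] [Nonempty ι]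
    (t : ι → ℝ) (x : X), Filter.Tendsto t Filter.atTop (nhds (0 : ℝ)) →
    conv (fun α => t α • x) (0 : X)
  conv_dominated : ∀ {ι : Type} [Preorder ι] [IsDirected ι (· ≤ ·)] [Nonempty ι]
    (f g : ι → X), conv f 0 → (∀ α, |g α| ≤ |f α|) → conv g 0
  conv_subnet : ∀ {ι κ : Type} [Preorder ι] [IsDirected ι (· ≤ ·)] [Nonempty ι]
    [Preorder κ] [IsDirected κ (· ≤ ·)] [Nonempty κ]
    (f : ι → X) (x : X) (φ : κ → ι), conv f x →
    (∀ α₀ : ι, ∃ β₀ : κ, ∀ β, β₀ ≤ β → α₀ ≤ φ β) → conv (fun β => f (φ β)) x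

/-- The Archimedean property for a vector lattice. -/
def IsArchimedeanVL (X : Type*) [Lattice X] [AddCommGroup X] : Prop :=
  ∀ x y : X, 0 ≤ x → (∀ n : ℕ, n • x ≤ y) → x = 0

variable {X : Type*} [Lattice X] [AddCommGroup X]
  [CovariantClass X X (· + ·) (· ≤ ·)] [Module ℝ X] [PosSMulMono ℝ X]

/-- The unbounded modification `uθ` of a convergence `θ`:
`x_α →uθ x` iff `(x_α ⊔ b) ⊓ c →θ (x ⊔ b) ⊓ c` for all `b ≤ c`. -/
def VLConvergence.uconv (θ : VLConvergence X)
    {ι : Type} [Preorder ι] [IsDirected ι (· ≤ ·)] [Nonempty ι]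
    (f : ι → X) (x : X) : Prop :=
  ∀ b c : X, b ≤ c → θ.conv (fun α => (f α ⊔ b) ⊓ c) ((x ⊔ b) ⊓ c)

/-- `Y` is sequentially `θ`-closed. -/
def VLConvergence.IsSeqClosedSet (θ : VLConvergence X) (Y : Set X) : Prop :=
  ∀ (f : ℕ → X) (x : X), (∀ n, f n ∈ Y) → θ.conv f x → x ∈ Y

/-- `Y` is sequentially `uθ`-closed. -/
def VLConvergence.IsSeqUClosedSet (θ : VLConvergence X) (Y : Set X) : Prop :=
  ∀ (f : ℕ → X) (x : X), (∀ n, f n ∈ Y) → θ.uconv f x → x ∈ Y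

/-!
A `θ`-convergent net is `uθ`-convergent, because truncation `a ↦ (a ⊔ b) ⊓ c` is
1-Lipschitz for `|·|`; hence `uθ`-closed sets are `θ`-closed. Conversely, let `Y` be
sequentially `θ`-closed and `f n ∈ Y` with `f →uθ x`. Truncating at `b = 0, c = (f m)⁺`
gives `(f n)⁺ ⊓ (f m)⁺ →θ x⁺ ⊓ (f m)⁺`, so `x⁺ ⊓ (f m)⁺ ∈ Y` for every `m`; truncating
at `b = 0, c = x⁺` gives `(f m)⁺ ⊓ x⁺ →θ x⁺`, so `x⁺ ∈ Y`. Applied to `-f`, this also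
gives `x⁻ ∈ Y`, and `x = x⁺ - x⁻`.
-/

section

omit [PosSMulMono ℝ X]

omit [Module ℝ X] in
theorem neg_sup_neg_inf_neg {b c : X} (hbc : b ≤ c) (a : X) :
    -((a ⊔ -c) ⊓ -b) = (-a ⊔ b) ⊓ c := by
  let _ : DistribLattice X := AddCommGroup.toDistribLattice X
  rw [neg_inf, neg_sup, neg_neg, neg_neg, sup_inf_right, sup_eq_left.2 hbc]

namespace VLConvergence

variable (θ : VLConvergence X) {ι : Type} [Preorder ι] [IsDirected ι (· ≤ ·)] [Nonempty ι]

section Linear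

omit [CovariantClass X X (· + ·) (· ≤ ·)]

theorem conv_neg {f : ι → X} {x : X} (hf : θ.conv f x) : θ.conv (fun α => -f α) (-x) := by
  simpa using θ.conv_add_smul (fun _ => 0) f 0 x (-1) (θ.conv_const 0) hf

theorem conv_sub_const {f : ι → X} {x : X} (hf : θ.conv f x) :
    θ.conv (fun α => f α - x) 0 := by
  simpa [sub_eq_add_neg] using θ.conv_add_smul f (fun _ => x) x x (-1) hf (θ.conv_const x)

theorem conv_of_conv_sub_const {f : ι → X} {x : X} (hf : θ.conv (fun α => f α - x) 0) :
    θ.conv f x := by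
  simpa using θ.conv_add_smul _ (fun _ => x) 0 x 1 hf (θ.conv_const x)

end Linear

theorem uconv_of_conv {f : ι → X} {x : X} (hf : θ.conv f x) : θ.uconv f x := by
  intro b c _
  refine θ.conv_of_conv_sub_const <| θ.conv_dominated _ _ (θ.conv_sub_const hf) fun α => ?_
  calc |(f α ⊔ b) ⊓ c - (x ⊔ b) ⊓ c| ≤ |f α ⊔ b - x ⊔ b| := abs_inf_sub_inf_le_abs _ _ _
    _ ≤ |f α - x| := abs_sup_sub_sup_le_abs _ _ _

theorem uconv_neg {f : ι → X} {x : X} (hf : θ.uconv f x) : θ.uconv (fun α => -f α) (-x) := by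
  intro b c hbc
  have h := θ.conv_neg (hf (-c) (-b) (neg_le_neg_iff.2 hbc))
  simpa only [neg_sup_neg_inf_neg hbc] using h

end VLConvergence

section Sublattice

variable {θ : VLConvergence X} {Y : Submodule ℝ X}

theorem Submodule.inf_mem_of_sup_mem (hYlat : ∀ a b : X, a ∈ Y → b ∈ Y → a ⊔ b ∈ Y)
    {a b : X} (ha : a ∈ Y) (hb : b ∈ Y) : a ⊓ b ∈ Y := by
  rw [eq_sub_of_add_eq (inf_add_sup a b)]
  exact sub_mem (add_mem ha hb) (hYlat a b ha hb)

theorem VLConvergence.IsSeqClosedSet.posPart_mem_of_uconv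
    (hYlat : ∀ a b : X, a ∈ Y → b ∈ Y → a ⊔ b ∈ Y) (hcl : θ.IsSeqClosedSet (Y : Set X))
    {f : ℕ → X} {x : X} (hfY : ∀ n, f n ∈ Y) (hu : θ.uconv f x) : x⁺ ∈ Y := by
  have hposY : ∀ n, (f n)⁺ ∈ Y := fun n => hYlat _ _ (hfY n) Y.zero_mem
  have hinfY : ∀ m, x⁺ ⊓ (f m)⁺ ∈ Y := fun m =>
    hcl _ _ (fun n => Submodule.inf_mem_of_sup_mem hYlat (hposY n) (hposY m))
      (hu 0 (f m)⁺ (posPart_nonneg _))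
  have hconv : θ.conv (fun m => (f m)⁺ ⊓ x⁺) x⁺ := by
    simpa only [← posPart_def, inf_idem] using hu 0 x⁺ (posPart_nonneg x)
  exact hcl _ _ (fun m => inf_comm x⁺ (f m)⁺ ▸ hinfY m) hconv

theorem VLConvergence.IsSeqClosedSet.isSeqUClosedSet
    (hYlat : ∀ a b : X, a ∈ Y → b ∈ Y → a ⊔ b ∈ Y) (hcl : θ.IsSeqClosedSet (Y : Set X)) :
    θ.IsSeqUClosedSet (Y : Set X) := by
  intro f x hfY hu
  have hpos : x⁺ ∈ Y := hcl.posPart_mem_of_uconv hYlat hfY hu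
  have hneg : x⁻ ∈ Y := by
    simpa only [posPart_neg] using
      hcl.posPart_mem_of_uconv hYlat (fun n => Y.neg_mem (hfY n)) (θ.uconv_neg hu)
  simpa only [posPart_sub_negPart, SetLike.mem_coe] using sub_mem hpos hneg

end Sublattice

theorem VLConvergence.IsSeqUClosedSet.isSeqClosedSet {θ : VLConvergence X} {Y : Set X}
    (hucl : θ.IsSeqUClosedSet Y) : θ.IsSeqClosedSet Y :=
  fun f x hfY hf => hucl f x hfY (θ.uconv_of_conv hf)

end

theorem stmt15_general (θ : VLConvergence X)
    (Y : Submodule ℝ X) (hYlat : ∀ a b : X, a ∈ Y → b ∈ Y → a ⊔ b ∈ Y) :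
    θ.IsSeqClosedSet (Y : Set X) ↔ θ.IsSeqUClosedSet (Y : Set X) :=
  ⟨fun hcl => hcl.isSeqUClosedSet hYlat, fun hucl => hucl.isSeqClosedSet⟩

theorem stmt15 (hArch : IsArchimedeanVL X) (θ : VLConvergence X)
    (Y : Submodule ℝ X) (hYlat : ∀ a b : X, a ∈ Y → b ∈ Y → a ⊔ b ∈ Y) :
    θ.IsSeqClosedSet (Y : Set X) ↔ θ.IsSeqUClosedSet (Y : Set X) :=
  stmt15_general θ Y hYlat
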